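/- (Regret transfer for Online SDS_MA.) Let V be a finite index set, and let T, k, s be positive integers. For each t ∈ [T] let u_t : ℝ^V → ℝ be differentiable with maximizers w_t^{(Z)} over {w : supp(w) ⊆ Z} existing for all Z with |Z| ≤ s, and set f_t(Z) := u_t(w_t^{(Z)}) − u_t(0), f̃_t(Z) := Σ_{a ∈ Z} f_t({a}), g_t(X) := max_{Z ⊆ X, |Z| ≤ s} f_t(Z), and g̃_t(X) := max_{Z ⊆ X, |Z| ≤ s} f̃_t(Z). Assume 0 < m_1 ≤ M_1 and 0 < m_s ≤ M_s and that each u_t is m_1-strongly concave and M_1-smooth on Ω_1, and m_s-strongly concave and M_s-smooth on Ω_s. Let R ≥ 0 and let X_1, …, X_T ⊆ V with |X_t| ≤ k satisfy (1 − 1/e)·max_{X ⊆ V, |X| ≤ k} Σ_{t=1}^T g̃_t(X) − Σ_{t=1}^T g̃_t(X_t) ≤ R. Then, with α = (1 − 1/e)·(m_1·m_s)/(M_1·M_s): α·max_{X ⊆ V, |X| ≤ k} Σ_{t=1}^T g_t(X) − Σ_{t=1}^T g_t(X_t) ≤ (m_1/M_s)·R. (With R = k·Δ_max·√(2T ln n),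 n = |V| and Δ_max = max_{a ∈ V} max_{t ∈ [T]} f_t({a}), this is the regret bound of the online modular approximation algorithm.) -/

import Mathlib

/-!
Write `G_Z = ∑_{a ∈ Z} (∂_a u_t(0))²`. Expanding `u_t` around `0` on `Ω_q` and completing the
square, strong concavity with modulus `m` gives `2m·(u_t(w) - u_t(0)) ≤ G_Z` for every `w`
supported in `Z`, while smoothness with constant `M`, tested at the restriction of `∇u_t(0)/M`
to `Z`, gives `G_Z ≤ 2M·f_t(Z)`. Using this on singletons (`q = 1`) and on `Z` itself (`q = s`)
sandwiches `m_s f_t ≤ M_1 f̃_t` and `m_1 f̃_t ≤ M_s f_t` on sets of size at most `s`; these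
pointwise comparisons pass through the maxima defining `g_t`, `g̃_t` and the best dictionary,
and combined with the regret bound for `g̃_t` they give the claim.
-/

open scoped RealInnerProductSpace

/-- The support of a vector, as a finset. -/
noncomputable def suppF {V : Type*} [Fintype V] [DecidableEq V]
    (w : EuclideanSpace ℝ V) : Finset V :=
  Finset.univ.filter fun a => w a ≠ 0

/-- The restriction `w_S` of a vector `w` to a set `S` of coordinates:
it agrees with `w` on `S` and is zero elsewhere. -/
noncomputable def restr {V : Type*} [Fintype V] [DecidableEq V]
    (w : EuclideanSpace ℝ V) (S : Finset V) : EuclideanSpace ℝ V :=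
  WithLp.toLp 2 (fun a => if a ∈ S then w a else 0)

/-- `gmax f s X = max_{Z ⊆ X, |Z| ≤ s} f Z` (the maximum is over a nonempty finite
collection since `Z = ∅` is always allowed). -/
noncomputable def gmax {V : Type*} [DecidableEq V] (f : Finset V → ℝ) (s : ℕ)
    (X : Finset V) : ℝ :=
  (X.powerset.filter fun Z => Z.card ≤ s).sup'
    ⟨∅, Finset.mem_filter.mpr ⟨Finset.empty_mem_powerset X, by simp⟩⟩ f

/-- `dictMax k h = max_{X ⊆ V, |X| ≤ k} h X`. -/
noncomputable def dictMax {V : Type*} [Fintype V] [DecidableEq V] (k : ℕ)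
    (h : Finset V → ℝ) : ℝ :=
  ((Finset.univ : Finset V).powerset.filter fun X => X.card ≤ k).sup'
    ⟨∅, Finset.mem_filter.mpr ⟨Finset.empty_mem_powerset _, by simp⟩⟩ h

section Sparse

variable {V : Type*} [Fintype V] [DecidableEq V]

lemma apply_eq_zero_of_suppF_subset {v : EuclideanSpace ℝ V} {Z : Finset V}
    (hv : suppF v ⊆ Z) {a : V} (ha : a ∉ Z) : v a = 0 :=
  not_not.1 fun hne => ha (hv (Finset.mem_filter.2 ⟨Finset.mem_univ a, hne⟩))

lemma suppF_restr_subset (v : EuclideanSpace ℝ V) (Z : Finset V) : suppF (restr v Z) ⊆ Z :=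
  fun a ha => by_contra fun h => (Finset.mem_filter.1 ha).2 (by simp [restr, h])

lemma suppF_zero_sub (v : EuclideanSpace ℝ V) : suppF (0 - v) = suppF v := by
  ext a; simp [suppF]

lemma two_mul_inner_sub_sq_mul_norm_sq_eq (g : EuclideanSpace ℝ V) {v : EuclideanSpace ℝ V}
    {Z : Finset V} (hv : suppF v ⊆ Z) (c : ℝ) :
    2 * c * ⟪g, v⟫ - c ^ 2 * ‖v‖ ^ 2 = ∑ a ∈ Z, (g a ^ 2 - (g a - c * v a) ^ 2) := by
  rw [PiLp.inner_apply, EuclideanSpace.real_norm_sq_eq, Finset.mul_sum, Finset.mul_sum,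
    ← Finset.sum_sub_distrib, ← Finset.sum_subset Z.subset_univ
      fun a _ ha => by simp [apply_eq_zero_of_suppF_subset hv ha]]
  refine Finset.sum_congr rfl fun a _ => ?_
  simp only [RCLike.inner_apply, conj_trivial]
  ring

lemma two_mul_inner_sub_sq_mul_norm_sq_le (g : EuclideanSpace ℝ V) {v : EuclideanSpace ℝ V}
    {Z : Finset V} (hv : suppF v ⊆ Z) (c : ℝ) :
    2 * c * ⟪g, v⟫ - c ^ 2 * ‖v‖ ^ 2 ≤ ∑ a ∈ Z, g a ^ 2 := by
  rw [two_mul_inner_sub_sq_mul_norm_sq_eq g hv]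
  exact Finset.sum_le_sum fun a _ => sub_le_self _ (sq_nonneg _)

lemma two_mul_inner_sub_sq_mul_norm_sq_restr (g : EuclideanSpace ℝ V) (Z : Finset V) {c : ℝ}
    (hc : c ≠ 0) :
    2 * c * ⟪g, restr (c⁻¹ • g) Z⟫ - c ^ 2 * ‖restr (c⁻¹ • g) Z‖ ^ 2 = ∑ a ∈ Z, g a ^ 2 := by
  rw [two_mul_inner_sub_sq_mul_norm_sq_eq g (suppF_restr_subset _ Z)]
  refine Finset.sum_congr rfl fun a ha => ?_
  simp [restr, ha, hc]

def SparselyStronglyConcave (u : EuclideanSpace ℝ V → ℝ) (m : ℝ) (q : ℕ) : Prop :=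
  ∀ x y : EuclideanSpace ℝ V,
    (suppF x).card ≤ q → (suppF y).card ≤ q → (suppF (x - y)).card ≤ q →
    u y - u x - ⟪gradient u x, y - x⟫ ≤ -(m / 2) * ‖y - x‖ ^ 2

def SparselySmooth (u : EuclideanSpace ℝ V → ℝ) (M : ℝ) (q : ℕ) : Prop :=
  ∀ x y : EuclideanSpace ℝ V,
    (suppF x).card ≤ q → (suppF y).card ≤ q → (suppF (x - y)).card ≤ q →
    u y - u x - ⟪gradient u x, y - x⟫ ≥ -(M / 2) * ‖y - x‖ ^ 2

variable {u : EuclideanSpace ℝ V → ℝ} {q : ℕ} {Z : Finset V}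

lemma SparselyStronglyConcave.two_mul_sub_le_sum_sq {m : ℝ}
    (hu : SparselyStronglyConcave u m q) (hm : 0 ≤ m) (hZ : Z.card ≤ q)
    {y : EuclideanSpace ℝ V} (hy : suppF y ⊆ Z) :
    2 * m * (u y - u 0) ≤ ∑ a ∈ Z, gradient u 0 a ^ 2 := by
  have hyq : (suppF y).card ≤ q := (Finset.card_le_card hy).trans hZ
  have hconc := hu 0 y (by simp [suppF]) hyq (by rwa [suppF_zero_sub])
  rw [sub_zero] at hconc
  nlinarith [two_mul_inner_sub_sq_mul_norm_sq_le (gradient u 0) hy m]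

lemma SparselySmooth.sum_sq_le_two_mul_sub {M : ℝ}
    (hu : SparselySmooth u M q) (hM : 0 < M) (hZ : Z.card ≤ q)
    {x : EuclideanSpace ℝ V} (hx : ∀ z, suppF z ⊆ Z → u z ≤ u x) :
    ∑ a ∈ Z, gradient u 0 a ^ 2 ≤ 2 * M * (u x - u 0) := by
  set y := restr (M⁻¹ • gradient u 0) Z
  have hy : suppF y ⊆ Z := suppF_restr_subset _ Z
  have hyq : (suppF y).card ≤ q := (Finset.card_le_card hy).trans hZ
  have hsmooth := hu 0 y (by simp [suppF]) hyq (by rwa [suppF_zero_sub])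
  rw [sub_zero] at hsmooth
  rw [← two_mul_inner_sub_sq_mul_norm_sq_restr (gradient u 0) Z hM.ne']
  nlinarith [hx y hy]

end Sparse

section ModularApproximation

variable {V : Type*} [Fintype V] [DecidableEq V] {u : EuclideanSpace ℝ V → ℝ}
  {w : Finset V → EuclideanSpace ℝ V} {s : ℕ} {Z : Finset V}

lemma mul_sub_le_mul_sum_singleton_sub {ms M1 : ℝ}
    (hconc : SparselyStronglyConcave u ms s) (hsmooth : SparselySmooth u M1 1)
    (hms : 0 ≤ ms) (hM1 : 0 < M1) (hs : 0 < s)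
    (hw_supp : ∀ Z : Finset V, Z.card ≤ s → suppF (w Z) ⊆ Z)
    (hw_max : ∀ Z : Finset V, Z.card ≤ s → ∀ z, suppF z ⊆ Z → u z ≤ u (w Z))
    (hZ : Z.card ≤ s) :
    ms * (u (w Z) - u 0) ≤ M1 * ∑ a ∈ Z, (u (w {a}) - u 0) := by
  have hsq_le : ∀ a, gradient u 0 a ^ 2 ≤ 2 * M1 * (u (w {a}) - u 0) := fun a => by
    simpa using hsmooth.sum_sq_le_two_mul_sub hM1 (Finset.card_singleton a).le
      (hw_max {a} ((Finset.card_singleton a).trans_le hs))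
  have hsum : ∑ a ∈ Z, gradient u 0 a ^ 2 ≤ 2 * M1 * ∑ a ∈ Z, (u (w {a}) - u 0) := by
    rw [Finset.mul_sum]
    exact Finset.sum_le_sum fun a _ => hsq_le a
  linarith [hconc.two_mul_sub_le_sum_sq hms hZ (hw_supp Z hZ)]

lemma mul_sum_singleton_sub_le_mul_sub {m1 Ms : ℝ}
    (hconc : SparselyStronglyConcave u m1 1) (hsmooth : SparselySmooth u Ms s)
    (hm1 : 0 ≤ m1) (hMs : 0 < Ms) (hs : 0 < s)
    (hw_supp : ∀ Z : Finset V, Z.card ≤ s → suppF (w Z) ⊆ Z)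
    (hw_max : ∀ Z : Finset V, Z.card ≤ s → ∀ z, suppF z ⊆ Z → u z ≤ u (w Z))
    (hZ : Z.card ≤ s) :
    m1 * ∑ a ∈ Z, (u (w {a}) - u 0) ≤ Ms * (u (w Z) - u 0) := by
  have hle_sq : ∀ a, 2 * m1 * (u (w {a}) - u 0) ≤ gradient u 0 a ^ 2 := fun a => by
    simpa using hconc.two_mul_sub_le_sum_sq hm1 (Finset.card_singleton a).le
      (hw_supp {a} ((Finset.card_singleton a).trans_le hs))
  have hsum : 2 * m1 * ∑ a ∈ Z, (u (w {a}) - u 0) ≤ ∑ a ∈ Z, gradient u 0 a ^ 2 := by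
    rw [Finset.mul_sum]
    exact Finset.sum_le_sum fun a _ => hle_sq a
  linarith [hsmooth.sum_sq_le_two_mul_sub hMs hZ (hw_max Z hZ)]

end ModularApproximation

lemma Finset.mul_sup'_le_mul_sup' {ι : Type*} {S : Finset ι} (hS : S.Nonempty)
    {f g : ι → ℝ} {a b : ℝ} (hb : 0 ≤ b) (h : ∀ i ∈ S, a * f i ≤ b * g i) :
    a * S.sup' hS f ≤ b * S.sup' hS g := by
  obtain ⟨i, hi, hfi⟩ := S.exists_mem_eq_sup' hS f
  rw [hfi]
  exact (h i hi).trans (mul_le_mul_of_nonneg_left (S.le_sup' g hi) hb)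

lemma mul_gmax_le_mul_gmax {V : Type*} [DecidableEq V] {f g : Finset V → ℝ} {s : ℕ}
    {a b : ℝ} (hb : 0 ≤ b) (h : ∀ Z : Finset V, Z.card ≤ s → a * f Z ≤ b * g Z)
    (X : Finset V) : a * gmax f s X ≤ b * gmax g s X :=
  Finset.mul_sup'_le_mul_sup' _ hb fun Z hZ => h Z (Finset.mem_filter.1 hZ).2

lemma mul_dictMax_le_mul_dictMax {V : Type*} [Fintype V] [DecidableEq V]
    {f g : Finset V → ℝ} {k : ℕ} {a b : ℝ} (hb : 0 ≤ b)
    (h : ∀ X : Finset V, X.card ≤ k → a * f X ≤ b * g X) :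
    a * dictMax k f ≤ b * dictMax k g :=
  Finset.mul_sup'_le_mul_sup' _ hb fun X hX => h X (Finset.mem_filter.1 hX).2

lemma Finset.mul_sum_le_mul_sum {ι : Type*} {S : Finset ι} {f g : ι → ℝ} {a b : ℝ}
    (h : ∀ i ∈ S, a * f i ≤ b * g i) : a * ∑ i ∈ S, f i ≤ b * ∑ i ∈ S, g i := by
  rw [Finset.mul_sum, Finset.mul_sum]
  exact Finset.sum_le_sum h

lemma regret_transfer {c m1 M1 ms Ms D D' S S' R : ℝ} (hc : 0 ≤ c) (hm1 : 0 ≤ m1)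
    (hM1 : 0 < M1) (hMs : 0 < Ms) (hD : ms * D ≤ M1 * D') (hS : m1 * S' ≤ Ms * S)
    (hR : c * D' - S' ≤ R) :
    c * (m1 * ms) / (M1 * Ms) * D - S ≤ m1 / Ms * R := by
  have hcm : 0 ≤ c * m1 / (M1 * Ms) := by positivity
  calc c * (m1 * ms) / (M1 * Ms) * D - S
      = c * m1 / (M1 * Ms) * (ms * D) - S := by ring
    _ ≤ c * m1 / (M1 * Ms) * (M1 * D') - m1 * S' / Ms := by
        gcongr
        rw [div_le_iff₀ hMs]; linarith
    _ = m1 / Ms * (c * D' - S') := by field_simp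
    _ ≤ m1 / Ms * R := by gcongr

theorem stmt18_general {V : Type*} [Fintype V] [DecidableEq V]
    (T k s : ℕ) (hs : 0 < s)
    (m1 M1 ms Ms : ℝ) (hm1 : 0 < m1) (hm1M1 : m1 ≤ M1) (hms : 0 < ms) (hmsMs : ms ≤ Ms)
    (u : Fin T → EuclideanSpace ℝ V → ℝ)
    (hconc1 : ∀ t, ∀ x y : EuclideanSpace ℝ V,
      (suppF x).card ≤ 1 → (suppF y).card ≤ 1 → (suppF (x - y)).card ≤ 1 →
      u t y - u t x - ⟪gradient (u t) x, y - x⟫ ≤ -(m1 / 2) * ‖y - x‖ ^ 2)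
    (hsmooth1 : ∀ t, ∀ x y : EuclideanSpace ℝ V,
      (suppF x).card ≤ 1 → (suppF y).card ≤ 1 → (suppF (x - y)).card ≤ 1 →
      u t y - u t x - ⟪gradient (u t) x, y - x⟫ ≥ -(M1 / 2) * ‖y - x‖ ^ 2)
    (hconcs : ∀ t, ∀ x y : EuclideanSpace ℝ V,
      (suppF x).card ≤ s → (suppF y).card ≤ s → (suppF (x - y)).card ≤ s →
      u t y - u t x - ⟪gradient (u t) x, y - x⟫ ≤ -(ms / 2) * ‖y - x‖ ^ 2)
    (hsmooths : ∀ t, ∀ x y : EuclideanSpace ℝ V,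
      (suppF x).card ≤ s → (suppF y).card ≤ s → (suppF (x - y)).card ≤ s →
      u t y - u t x - ⟪gradient (u t) x, y - x⟫ ≥ -(Ms / 2) * ‖y - x‖ ^ 2)
    (w : Fin T → Finset V → EuclideanSpace ℝ V)
    (hw_supp : ∀ t, ∀ Z : Finset V, Z.card ≤ s → suppF (w t Z) ⊆ Z)
    (hw_max : ∀ t, ∀ Z : Finset V, Z.card ≤ s →
      ∀ z : EuclideanSpace ℝ V, suppF z ⊆ Z → u t z ≤ u t (w t Z))
    (R : ℝ) (X : Fin T → Finset V)
    (hreg : (1 - 1 / Real.exp 1) *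
          dictMax k (fun Y => ∑ t, gmax (fun Z => ∑ a ∈ Z, (u t (w t {a}) - u t 0)) s Y)
        - ∑ t, gmax (fun Z => ∑ a ∈ Z, (u t (w t {a}) - u t 0)) s (X t) ≤ R) :
    (1 - 1 / Real.exp 1) * (m1 * ms) / (M1 * Ms) *
        dictMax k (fun Y => ∑ t, gmax (fun Z => u t (w t Z) - u t 0) s Y)
      - ∑ t, gmax (fun Z => u t (w t Z) - u t 0) s (X t) ≤ (m1 / Ms) * R := by
  have hM1 : 0 < M1 := hm1.trans_le hm1M1
  have hMs : 0 < Ms := hms.trans_le hmsMs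
  have he : 0 ≤ 1 - 1 / Real.exp 1 :=
    sub_nonneg.2 ((div_le_one (Real.exp_pos 1)).2 (Real.one_le_exp zero_le_one))
  refine regret_transfer he hm1.le hM1 hMs ?_ ?_ hreg
  · refine mul_dictMax_le_mul_dictMax hM1.le fun Y _ =>
      Finset.mul_sum_le_mul_sum fun t _ => mul_gmax_le_mul_gmax hM1.le (fun Z hZ => ?_) Y
    exact mul_sub_le_mul_sum_singleton_sub (hconcs t) (hsmooth1 t) hms.le hM1 hs
      (hw_supp t) (hw_max t) hZ
  · refine Finset.mul_sum_le_mul_sum fun t _ =>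
      mul_gmax_le_mul_gmax hMs.le (fun Z hZ => ?_) (X t)
    exact mul_sum_singleton_sub_le_mul_sub (hconc1 t) (hsmooths t) hm1.le hMs hs
      (hw_supp t) (hw_max t) hZ

/-- regret transfer for Online SDS_MA. A `(1 - 1/e)`-regret bound `R` for
the surrogate objectives `g̃_t` yields an `α`-regret bound `(m₁/M_s)·R` for the true
objectives `g_t`, where `α = (1 - 1/e)·m₁·m_s/(M₁·M_s)`. -/
theorem stmt18 {V : Type*} [Fintype V] [DecidableEq V]
    (T k s : ℕ) (hT : 0 < T) (hk : 0 < k) (hs : 0 < s)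
    (m1 M1 ms Ms : ℝ) (hm1 : 0 < m1) (hm1M1 : m1 ≤ M1) (hms : 0 < ms) (hmsMs : ms ≤ Ms)
    (u : Fin T → EuclideanSpace ℝ V → ℝ) (hu : ∀ t, Differentiable ℝ (u t))
    (hconc1 : ∀ t, ∀ x y : EuclideanSpace ℝ V,
      (suppF x).card ≤ 1 → (suppF y).card ≤ 1 → (suppF (x - y)).card ≤ 1 →
      u t y - u t x - ⟪gradient (u t) x, y - x⟫ ≤ -(m1 / 2) * ‖y - x‖ ^ 2)
    (hsmooth1 : ∀ t, ∀ x y : EuclideanSpace ℝ V,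
      (suppF x).card ≤ 1 → (suppF y).card ≤ 1 → (suppF (x - y)).card ≤ 1 →
      u t y - u t x - ⟪gradient (u t) x, y - x⟫ ≥ -(M1 / 2) * ‖y - x‖ ^ 2)
    (hconcs : ∀ t, ∀ x y : EuclideanSpace ℝ V,
      (suppF x).card ≤ s → (suppF y).card ≤ s → (suppF (x - y)).card ≤ s →
      u t y - u t x - ⟪gradient (u t) x, y - x⟫ ≤ -(ms / 2) * ‖y - x‖ ^ 2)
    (hsmooths : ∀ t, ∀ x y : EuclideanSpace ℝ V,
      (suppF x).card ≤ s → (suppF y).card ≤ s → (suppF (x - y)).card ≤ s →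
      u t y - u t x - ⟪gradient (u t) x, y - x⟫ ≥ -(Ms / 2) * ‖y - x‖ ^ 2)
    (w : Fin T → Finset V → EuclideanSpace ℝ V)
    (hw_supp : ∀ t, ∀ Z : Finset V, Z.card ≤ s → suppF (w t Z) ⊆ Z)
    (hw_max : ∀ t, ∀ Z : Finset V, Z.card ≤ s →
      ∀ z : EuclideanSpace ℝ V, suppF z ⊆ Z → u t z ≤ u t (w t Z))
    (hw_grad : ∀ t, ∀ Z : Finset V, Z.card ≤ s → ∀ a ∈ Z, gradient (u t) (w t Z) a = 0)
    (R : ℝ) (X : Fin T → Finset V) (hX : ∀ t, (X t).card ≤ k)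
    (hreg : (1 - 1 / Real.exp 1) *
          dictMax k (fun Y => ∑ t, gmax (fun Z => ∑ a ∈ Z, (u t (w t {a}) - u t 0)) s Y)
        - ∑ t, gmax (fun Z => ∑ a ∈ Z, (u t (w t {a}) - u t 0)) s (X t) ≤ R) :
    (1 - 1 / Real.exp 1) * (m1 * ms) / (M1 * Ms) *
        dictMax k (fun Y => ∑ t, gmax (fun Z => u t (w t Z) - u t 0) s Y)
      - ∑ t, gmax (fun Z => u t (w t Z) - u t 0) s (X t) ≤ (m1 / Ms) * R :=
  stmt18_general T k s hs m1 M1 ms Ms hm1 hm1M1 hms hmsMs u hconc1 hsmooth1 hconcs hsmooths w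
    hw_supp hw_max R X hreg
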